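/- arXiv:2110.08995 — 4 statements merged into one kernel-verified Lean document; each statement's English description precedes it below -/
import Mathlib

section
/- Let a : H1 → H2 and b : H2 → H1 be linear operators on vector spaces with adjoint-like partners a* : H2 → H1 and b* : H1 → H2 satisfying the coupled SUSY relations a*a = bb* + γ·id and aa* = b*b + δ·id for real constants γ, δ. Then [a*a, a*b*] = (δ - γ) a*b*, where a*b* : H1 → H1. -/
/-- Coupled SUSY relations imply `[a*a, a*b*] = (δ - γ) a*b*` on `H1`. -/
theorem stmt1 (H1 H2 : Type*) [AddCommGroup H1] [Module ℂ H1]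
    [AddCommGroup H2] [Module ℂ H2]
    (a : H1 →ₗ[ℂ] H2) (b : H2 →ₗ[ℂ] H1)
    (astar : H2 →ₗ[ℂ] H1) (bstar : H1 →ₗ[ℂ] H2) (γ δ : ℝ)
    (h1 : astar ∘ₗ a = b ∘ₗ bstar + (γ : ℂ) • (LinearMap.id : H1 →ₗ[ℂ] H1))
    (h2 : a ∘ₗ astar = bstar ∘ₗ b + (δ : ℂ) • (LinearMap.id : H2 →ₗ[ℂ] H2)) :
    (astar ∘ₗ a) ∘ₗ (astar ∘ₗ bstar) - (astar ∘ₗ bstar) ∘ₗ (astar ∘ₗ a)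
      = ((δ : ℂ) - (γ : ℂ)) • (astar ∘ₗ bstar) := by
  have e1 : (astar ∘ₗ a) ∘ₗ (astar ∘ₗ bstar)
      = astar ∘ₗ (a ∘ₗ astar) ∘ₗ bstar := by
    ext x; simp
  rw [e1, h2, h1]
  ext x
  simp [sub_smul]
end

section
/- Under the coupled SUSY relations a*a = bb* + γ·id and aa* = b*b + δ·id, the commutator [a*b*, ba] equals -2(δ - γ)(a*a - (γ/2)·id) as operators on H1. -/
/-- Coupled SUSY relations imply `[a*b*, ba] = -2(δ-γ)(a*a - (γ/2)·id)` on `H1`. -/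
theorem stmt2 (H1 H2 : Type*) [AddCommGroup H1] [Module ℂ H1]
    [AddCommGroup H2] [Module ℂ H2]
    (a : H1 →ₗ[ℂ] H2) (b : H2 →ₗ[ℂ] H1)
    (astar : H2 →ₗ[ℂ] H1) (bstar : H1 →ₗ[ℂ] H2) (γ δ : ℝ)
    (h1 : astar ∘ₗ a = b ∘ₗ bstar + (γ : ℂ) • (LinearMap.id : H1 →ₗ[ℂ] H1))
    (h2 : a ∘ₗ astar = bstar ∘ₗ b + (δ : ℂ) • (LinearMap.id : H2 →ₗ[ℂ] H2)) :
    (astar ∘ₗ bstar) ∘ₗ (b ∘ₗ a) - (b ∘ₗ a) ∘ₗ (astar ∘ₗ bstar)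
      = (-2 * ((δ : ℂ) - (γ : ℂ))) •
          (astar ∘ₗ a - ((γ : ℂ) / 2) • (LinearMap.id : H1 →ₗ[ℂ] H1)) := by
  have hbb : bstar ∘ₗ b = a ∘ₗ astar - (δ : ℂ) • LinearMap.id :=
    eq_sub_of_add_eq h2.symm
  have hbb2 : b ∘ₗ bstar = astar ∘ₗ a - (γ : ℂ) • LinearMap.id :=
    eq_sub_of_add_eq h1.symm
  set A := astar ∘ₗ a with hA
  have t1 : (astar ∘ₗ bstar) ∘ₗ (b ∘ₗ a) = A ∘ₗ A - (δ : ℂ) • A := by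
    calc (astar ∘ₗ bstar) ∘ₗ (b ∘ₗ a) = astar ∘ₗ ((bstar ∘ₗ b) ∘ₗ a) := by
          simp [LinearMap.comp_assoc]
      _ = astar ∘ₗ ((a ∘ₗ astar - (δ : ℂ) • LinearMap.id) ∘ₗ a) := by rw [hbb]
      _ = A ∘ₗ A - (δ : ℂ) • A := by
          simp [LinearMap.comp_assoc, LinearMap.sub_comp, LinearMap.comp_sub,
            LinearMap.smul_comp, LinearMap.comp_smul, hA]
  have t2 : (b ∘ₗ a) ∘ₗ (astar ∘ₗ bstar)
      = (A - (γ : ℂ) • LinearMap.id) ∘ₗ (A - (γ : ℂ) • LinearMap.id)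
        + (δ : ℂ) • (A - (γ : ℂ) • LinearMap.id) := by
    calc (b ∘ₗ a) ∘ₗ (astar ∘ₗ bstar) = b ∘ₗ ((a ∘ₗ astar) ∘ₗ bstar) := by
          simp [LinearMap.comp_assoc]
      _ = b ∘ₗ ((bstar ∘ₗ b + (δ : ℂ) • LinearMap.id) ∘ₗ bstar) := by rw [h2]
      _ = (b ∘ₗ bstar) ∘ₗ (b ∘ₗ bstar) + (δ : ℂ) • (b ∘ₗ bstar) := by
          simp [LinearMap.comp_assoc, LinearMap.add_comp, LinearMap.comp_add,
            LinearMap.smul_comp, LinearMap.comp_smul]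
      _ = (A - (γ : ℂ) • LinearMap.id) ∘ₗ (A - (γ : ℂ) • LinearMap.id)
          + (δ : ℂ) • (A - (γ : ℂ) • LinearMap.id) := by rw [hbb2]
  rw [t1, t2]
  simp only [LinearMap.sub_comp, LinearMap.comp_sub, LinearMap.smul_comp,
    LinearMap.comp_smul, LinearMap.id_comp, LinearMap.comp_id, smul_sub,
    smul_smul]
  module
end

section
/- Under the coupled SUSY relations a*a = bb* + γ·id and aa* = b*b + δ·id, for every natural number l ≥ 1 one has the operator identity (ba)^l (a*b*)^l = ∏_{k=1}^{l} (a*a + ((k-1)δ - kγ)·id)(a*a + (kδ - kγ)·id) on H1. -/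
/-- Coupled SUSY relations imply the product identity
`(ba)^l (a*b*)^l = ∏_{k=1}^{l} (a*a + ((k-1)δ - kγ)·id)(a*a + (kδ - kγ)·id)` on `H1`. -/
theorem stmt3 (H1 H2 : Type*) [AddCommGroup H1] [Module ℂ H1]
    [AddCommGroup H2] [Module ℂ H2]
    (a : H1 →ₗ[ℂ] H2) (b : H2 →ₗ[ℂ] H1)
    (astar : H2 →ₗ[ℂ] H1) (bstar : H1 →ₗ[ℂ] H2) (γ δ : ℝ)
    (h1 : (astar ∘ₗ a : Module.End ℂ H1) = (b ∘ₗ bstar : Module.End ℂ H1) + (γ : ℂ) • 1)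
    (h2 : (a ∘ₗ astar : Module.End ℂ H2) = (bstar ∘ₗ b : Module.End ℂ H2) + (δ : ℂ) • 1)
    (l : ℕ) (hl : 1 ≤ l) :
    ((b ∘ₗ a : Module.End ℂ H1)) ^ l * ((astar ∘ₗ bstar : Module.End ℂ H1)) ^ l
      = ((List.range l).map (fun j =>
          let k : ℕ := j + 1
          (((astar ∘ₗ a : Module.End ℂ H1) + ((((k : ℂ) - 1) * δ - (k : ℂ) * γ)) • 1)
            * ((astar ∘ₗ a : Module.End ℂ H1) + (((k : ℂ) * δ - (k : ℂ) * γ)) • 1)))).prod := by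
  set A : Module.End ℂ H1 := astar ∘ₗ a with hA
  set B : Module.End ℂ H1 := b ∘ₗ a with hB
  set C : Module.End ℂ H1 := astar ∘ₗ bstar with hC
  -- pointwise versions of the hypotheses
  have h1' : ∀ x : H1, b (bstar x) = A x - (γ : ℂ) • x := by
    intro x
    have := LinearMap.ext_iff.mp h1 x
    simp only [LinearMap.add_apply, LinearMap.smul_apply, Module.End.one_apply] at this
    rw [this]; abel
  have h2' : ∀ y : H2, a (astar y) = bstar (b y) + (δ : ℂ) • y := by
    intro y
    have := LinearMap.ext_iff.mp h2 y
    simpa only [LinearMap.add_apply, LinearMap.smul_apply, Module.End.one_apply,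
      LinearMap.comp_apply] using this
  -- base multiplication fact : B*C = (A - γ)(A + δ - γ)
  have hBC : B * C = (A + (-(γ:ℂ)) • 1) * (A + ((δ:ℂ) - γ) • 1) := by
    apply LinearMap.ext; intro x
    simp only [Module.End.mul_apply, LinearMap.add_apply, LinearMap.smul_apply,
      Module.End.one_apply, hB, hC, LinearMap.comp_apply, h2', h1', map_add, map_sub, map_smul]
    module
  -- shift relation : B * (A + c•1) = (A + (c + δ - γ)•1) * B
  have haA : ∀ x : H1, a (A x) = bstar (b (a x)) + (δ : ℂ) • a x := by
    intro x
    have : A x = astar (a x) := rfl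
    rw [this, h2' (a x)]
  have hshift : ∀ c : ℂ, B * (A + c • 1) = (A + (c + δ - γ) • 1) * B := by
    intro c
    apply LinearMap.ext; intro x
    simp only [Module.End.mul_apply, LinearMap.add_apply, LinearMap.smul_apply,
      Module.End.one_apply, hB, LinearMap.comp_apply, map_add, map_smul, haA, h1']
    module
  -- powers of the shift relation
  have hshiftpow : ∀ (n : ℕ) (c : ℂ),
      B ^ n * (A + c • 1) = (A + (c + n * ((δ:ℂ) - γ)) • 1) * B ^ n := by
    intro n
    induction n with
    | zero => intro c; simp
    | succ n ih =>
      intro c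
      rw [pow_succ', mul_assoc, ih c, ← mul_assoc, hshift, mul_assoc, ← pow_succ']
      push_cast
      ring_nf
  -- scalar multiples of the identity are central; factors commute
  have hcentral : ∀ (e : ℂ) (x : Module.End ℂ H1), Commute (e • 1) x := by
    intro e x
    exact (Commute.one_left x).smul_left e
  have hcommA : ∀ c c' : ℂ, Commute ((A + c • 1) : Module.End ℂ H1) (A + c' • 1) := by
    intro c c'
    exact Commute.add_left ((Commute.refl A).add_right ((hcentral c' A).symm))
      (hcentral c (A + c' • 1))
  -- the factor function
  set f : ℕ → Module.End ℂ H1 := fun j =>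
    (A + ((((j + 1 : ℕ) : ℂ) - 1) * δ - ((j + 1 : ℕ) : ℂ) * γ) • 1)
      * (A + ((((j + 1 : ℕ) : ℂ)) * δ - ((j + 1 : ℕ) : ℂ) * γ) • 1) with hf
  show B ^ l * C ^ l = ((List.range l).map f).prod
  induction l, hl using Nat.le_induction with
  | base =>
    rw [pow_one, pow_one, hBC, List.range_succ, List.range_zero]
    simp only [List.nil_append, List.map_cons, List.map_nil, List.prod_cons, List.prod_nil,
      mul_one, hf]
    norm_num
  | succ n hn ih =>
    have e1 : (-(γ:ℂ) + n * ((δ:ℂ) - γ)) = (((n + 1 : ℕ) : ℂ) - 1) * δ - ((n + 1 : ℕ) : ℂ) * γ := by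
      push_cast; ring
    have e2 : ((δ:ℂ) - γ + n * ((δ:ℂ) - γ)) = ((n + 1 : ℕ) : ℂ) * δ - ((n + 1 : ℕ) : ℂ) * γ := by
      push_cast; ring
    have key : B ^ (n + 1) * C ^ (n + 1) = f n * (B ^ n * C ^ n) := by
      calc B ^ (n + 1) * C ^ (n + 1)
          = (B ^ n * B) * (C * C ^ n) := by rw [pow_succ, pow_succ']
        _ = (B ^ n * (A + (-(γ:ℂ)) • 1)) * ((A + ((δ:ℂ) - γ) • 1) * C ^ n) := by
            rw [mul_assoc, ← mul_assoc B, hBC, ← mul_assoc, ← mul_assoc, mul_assoc (B ^ n)]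
            simp only [mul_assoc]
        _ = ((A + (-(γ:ℂ) + n * ((δ:ℂ) - γ)) • 1) * B ^ n)
              * ((A + ((δ:ℂ) - γ) • 1) * C ^ n) := by rw [hshiftpow]
        _ = (A + (-(γ:ℂ) + n * ((δ:ℂ) - γ)) • 1)
              * ((B ^ n * (A + ((δ:ℂ) - γ) • 1)) * C ^ n) := by
            rw [mul_assoc, ← mul_assoc (B ^ n)]
        _ = (A + (-(γ:ℂ) + n * ((δ:ℂ) - γ)) • 1)
              * (((A + ((δ:ℂ) - γ + n * ((δ:ℂ) - γ)) • 1) * B ^ n) * C ^ n) := by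
            rw [hshiftpow]
        _ = ((A + (-(γ:ℂ) + n * ((δ:ℂ) - γ)) • 1)
              * (A + ((δ:ℂ) - γ + n * ((δ:ℂ) - γ)) • 1)) * (B ^ n * C ^ n) := by
            rw [mul_assoc, ← mul_assoc, ← mul_assoc, mul_assoc _ (B ^ n)]
        _ = f n * (B ^ n * C ^ n) := by rw [e1, e2, hf]
    rw [key, ih, List.range_succ, List.map_append, List.prod_append]
    simp only [List.map_cons, List.map_nil, List.prod_cons, List.prod_nil, mul_one]
    have hcomm : Commute (f n) (((List.range n).map f).prod) := by
      apply Commute.list_prod_right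
      intro x hx
      simp only [List.mem_map] at hx
      obtain ⟨j, _, rfl⟩ := hx
      rw [hf]
      exact ((hcommA _ _).mul_right (hcommA _ _)).mul_left ((hcommA _ _).mul_right (hcommA _ _))
    exact hcomm.eq
end

section
/- Let n ≥ 1 and let a* = (1/√2)(-(d/dx) ∘ x^{-(n-1)} + x^n) and b* = (1/√2)(-x^{-(n-1)} d/dx + x^n). For every l ≥ 1, the Rodrigues-type formula (a*b*)^l e^{-x^{2n}/(2n)} = (1/2^l) e^{x^{2n}/(2n)} ((d/dx) ∘ x^{-(2n-2)} ∘ (d/dx))^l e^{-x^{2n}/n} holds on ℝ \ {0}. -/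
open Real

/-- The raising operator `a*`: `a* f(x) = (1/√2)(-(f(x)/x^{n-1})' + x^n f(x))`. -/
noncomputable def aStar (n : ℕ) (f : ℝ → ℝ) : ℝ → ℝ := fun x =>
  (1 / Real.sqrt 2) * (-(deriv (fun s => f s / s ^ (n - 1)) x) + x ^ n * f x)

/-- The raising operator `b*`: `b* f(x) = (1/√2)(-f'(x)/x^{n-1} + x^n f(x))`. -/
noncomputable def bStar (n : ℕ) (f : ℝ → ℝ) : ℝ → ℝ := fun x =>
  (1 / Real.sqrt 2) * (-(deriv f x) / x ^ (n - 1) + x ^ n * f x)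

/-- The second-order operator `(d/dx) ∘ x^{-(2n-2)} ∘ (d/dx)`. -/
noncomputable def Dop (n : ℕ) (g : ℝ → ℝ) : ℝ → ℝ := fun x =>
  deriv (fun s => deriv g s / s ^ (2 * n - 2)) x


/-! The weight `E(x) = e^{x^{2n}/(2n)}` satisfies `E' = x^{2n-1} E = x^n · x^{n-1} E`, so conjugating by it
removes the potential terms: `E⁻¹ b* E = -(1/√2) x^{-(n-1)} d/dx` and `E⁻¹ a* E = -(1/√2) (d/dx) x^{-(n-1)}`
on `ℝ \ {0}`. Hence `E⁻¹ a* b* E = ½ (d/dx) x^{-(2n-2)} (d/dx)`, and iterating this on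
`e^{-x^{2n}/(2n)} = E · e^{-x^{2n}/n}` gives the formula. -/

open Set Filter Topology
open scoped ContDiff

noncomputable def expWeight (n : ℕ) (x : ℝ) : ℝ := Real.exp (x ^ (2 * n) / (2 * n))

lemma hasDerivAt_expWeight {n : ℕ} (hn : n ≠ 0) (x : ℝ) :
    HasDerivAt (expWeight n) (x ^ n * x ^ (n - 1) * expWeight n x) x := by
  have hpow : HasDerivAt (fun t : ℝ => t ^ (2 * n) / (2 * n)) (x ^ n * x ^ (n - 1)) x := by
    refine ((hasDerivAt_pow (2 * n) x).div_const (2 * n : ℝ)).congr_deriv ?_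
    rw [← pow_add, show n + (n - 1) = 2 * n - 1 by omega]
    push_cast
    field_simp
  exact mul_comm (Real.exp _) _ ▸ hpow.exp

section Locality

variable {n : ℕ} {f g : ℝ → ℝ} {U : Set ℝ}

lemma bStar_congr (hU : IsOpen U) (hfg : EqOn f g U) : EqOn (bStar n f) (bStar n g) U := by
  intro x hx
  have hev : f =ᶠ[𝓝 x] g := eventuallyEq_of_mem (hU.mem_nhds hx) hfg
  simp only [bStar, hev.deriv_eq, hfg hx]

lemma aStar_congr (hU : IsOpen U) (hfg : EqOn f g U) : EqOn (aStar n f) (aStar n g) U := by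
  intro x hx
  have hev : (fun s => f s / s ^ (n - 1)) =ᶠ[𝓝 x] fun s => g s / s ^ (n - 1) :=
    eventuallyEq_of_mem (hU.mem_nhds hx) fun s hs => by simp only [hfg hs]
  simp only [aStar, hev.deriv_eq, hfg hx]

end Locality

section Conjugation

variable {n : ℕ} {x : ℝ}

lemma bStar_expWeight_mul (hn : n ≠ 0) (hx : x ≠ 0) {G : ℝ → ℝ} (hG : DifferentiableAt ℝ G x) :
    bStar n (fun s => expWeight n s * G s) x
      = expWeight n x * (-(1 / √2) * (deriv G x / x ^ (n - 1))) := by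
  have hp : x ^ (n - 1) ≠ 0 := pow_ne_zero _ hx
  rw [bStar, ((hasDerivAt_expWeight hn x).fun_mul hG.hasDerivAt).deriv]
  field_simp
  ring

lemma aStar_expWeight_mul (hn : n ≠ 0) (hx : x ≠ 0) {u : ℝ → ℝ}
    (hu : DifferentiableAt ℝ (fun s => u s / s ^ (n - 1)) x) :
    aStar n (fun s => expWeight n s * u s) x
      = expWeight n x * (-(1 / √2) * deriv (fun s => u s / s ^ (n - 1)) x) := by
  have hp : x ^ (n - 1) ≠ 0 := pow_ne_zero _ hx
  have hfun : (fun s => expWeight n s * u s / s ^ (n - 1))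
      = fun s => expWeight n s * (u s / s ^ (n - 1)) := by
    funext s
    rw [mul_div_assoc]
  rw [aStar, hfun, ((hasDerivAt_expWeight hn x).fun_mul hu.hasDerivAt).deriv]
  field_simp
  ring

lemma aStar_bStar_expWeight_mul (hn : n ≠ 0) {G : ℝ → ℝ} (hG : ContDiffOn ℝ 2 G {0}ᶜ) :
    EqOn (aStar n (bStar n (fun s => expWeight n s * G s)))
      (fun s => expWeight n s * (Dop n G s / 2)) {0}ᶜ := by
  intro x (hx : x ≠ 0)
  have hopen : IsOpen ({0}ᶜ : Set ℝ) := isOpen_compl_singleton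
  have hGd : ∀ s ∈ ({0}ᶜ : Set ℝ), DifferentiableAt ℝ G s := fun s hs =>
    (hG.differentiableOn two_ne_zero).differentiableAt (hopen.mem_nhds hs)
  have hG'd : DifferentiableAt ℝ (deriv G) x :=
    ((hG.deriv_of_isOpen hopen (by norm_num)).differentiableOn one_ne_zero).differentiableAt
      (hopen.mem_nhds hx)
  set u : ℝ → ℝ := fun s => -(1 / √2) * (deriv G s / s ^ (n - 1))
  have hb : EqOn (bStar n fun s => expWeight n s * G s) (fun s => expWeight n s * u s) {0}ᶜ :=
    fun s hs => bStar_expWeight_mul hn hs (hGd s hs)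
  have hu : (fun s => u s / s ^ (n - 1))
      =ᶠ[𝓝 x] fun s => -(1 / √2) * (deriv G s / s ^ (2 * n - 2)) := by
    filter_upwards [hopen.mem_nhds hx] with s hs
    have hp : s ^ (n - 1) ≠ 0 := pow_ne_zero _ hs
    simp only [u]
    rw [show 2 * n - 2 = (n - 1) + (n - 1) by omega, pow_add]
    field_simp
  have hud : DifferentiableAt ℝ (fun s => u s / s ^ (n - 1)) x :=
    ((hG'd.div (differentiableAt_id.pow _) (pow_ne_zero _ hx)).const_mul _).congr_of_eventuallyEq hu
  calc aStar n (bStar n fun s => expWeight n s * G s) x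
      = aStar n (fun s => expWeight n s * u s) x := aStar_congr hopen hb hx
    _ = expWeight n x * (-(1 / √2) * deriv (fun s => u s / s ^ (n - 1)) x) :=
      aStar_expWeight_mul hn hx hud
    _ = expWeight n x * (Dop n G x / 2) := by
      rw [hu.deriv_eq, deriv_const_mul_field']
      simp only [Dop]
      field_simp
      rw [Real.sq_sqrt zero_le_two]
      ring

end Conjugation

section Dop

variable {n : ℕ}

lemma Dop_div_const (g : ℝ → ℝ) (c : ℝ) :
    Dop n (fun s => g s / c) = fun s => Dop n g s / c := by
  funext x
  simp only [Dop, deriv_div_const, div_right_comm _ c]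

lemma contDiffOn_Dop {g : ℝ → ℝ} (hg : ContDiffOn ℝ ∞ g {0}ᶜ) : ContDiffOn ℝ ∞ (Dop n g) {0}ᶜ := by
  have hopen : IsOpen ({0}ᶜ : Set ℝ) := isOpen_compl_singleton
  refine ContDiffOn.deriv_of_isOpen ?_ hopen le_rfl
  exact (hg.deriv_of_isOpen hopen le_rfl).div (contDiffOn_id.pow _) fun s hs => pow_ne_zero _ hs

lemma contDiffOn_iterate_Dop {g : ℝ → ℝ} (hg : ContDiffOn ℝ ∞ g {0}ᶜ) (l : ℕ) :
    ContDiffOn ℝ ∞ ((Dop n)^[l] g) {0}ᶜ := by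
  induction l with
  | zero => exact hg
  | succ l ih => simpa only [Function.iterate_succ_apply'] using contDiffOn_Dop ih

end Dop

lemma iterate_aStar_bStar_expWeight_mul {n : ℕ} (hn : n ≠ 0) {g : ℝ → ℝ}
    (hg : ContDiffOn ℝ ∞ g {0}ᶜ) (l : ℕ) :
    EqOn ((fun f => aStar n (bStar n f))^[l] fun s => expWeight n s * g s)
      (fun s => expWeight n s * ((Dop n)^[l] g s / 2 ^ l)) {0}ᶜ := by
  induction l with
  | zero => intro x _; simp
  | succ l ih =>
    intro x hx
    have hGl : ContDiffOn ℝ 2 (fun s => (Dop n)^[l] g s / 2 ^ l) {0}ᶜ :=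
      ((contDiffOn_iterate_Dop hg l).div_const _).of_le ENat.LEInfty.out
    rw [Function.iterate_succ_apply', Function.iterate_succ_apply',
      aStar_congr isOpen_compl_singleton (bStar_congr isOpen_compl_singleton ih) hx,
      aStar_bStar_expWeight_mul hn hGl hx, Dop_div_const, pow_succ]
    simp only [div_div]

theorem stmt13_general (n : ℕ) (hn : 1 ≤ n) (l : ℕ) (x : ℝ) (hx : x ≠ 0) :
    ((fun f => aStar n (bStar n f))^[l] (fun s => Real.exp (-s ^ (2 * n) / (2 * n)))) x
      = (1 / 2 ^ l) * Real.exp (x ^ (2 * n) / (2 * n)) *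
          ((Dop n)^[l] (fun s => Real.exp (-s ^ (2 * n) / n))) x := by
  have hn0 : n ≠ 0 := by omega
  have hground : (fun s : ℝ => Real.exp (-s ^ (2 * n) / (2 * n)))
      = fun s => expWeight n s * Real.exp (-s ^ (2 * n) / n) := by
    funext s
    rw [expWeight, ← Real.exp_add]
    congr 1
    field_simp
    ring
  have hsmooth : ContDiffOn ℝ ∞ (fun s : ℝ => Real.exp (-s ^ (2 * n) / n)) {0}ᶜ := by fun_prop
  rw [hground, iterate_aStar_bStar_expWeight_mul hn0 hsmooth l hx]
  simp only [expWeight]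
  ring

/-- Rodrigues-type formula:
`(a*b*)^l e^{-x^{2n}/(2n)} = (1/2^l) e^{x^{2n}/(2n)} ((d/dx) x^{-(2n-2)} (d/dx))^l e^{-x^{2n}/n}`
on `ℝ \ {0}`. -/
theorem stmt13 (n : ℕ) (hn : 1 ≤ n) (l : ℕ) (hl : 1 ≤ l) (x : ℝ) (hx : x ≠ 0) :
    ((fun f => aStar n (bStar n f))^[l] (fun s => Real.exp (-s ^ (2 * n) / (2 * n)))) x
      = (1 / 2 ^ l) * Real.exp (x ^ (2 * n) / (2 * n)) *
          ((Dop n)^[l] (fun s => Real.exp (-s ^ (2 * n) / n))) x :=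
  stmt13_general n hn l x hx
end
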